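/- An infinite word U is aperiodic and Sturmian (complexity p(n) = n+1 for all n) if and only if for every factor w of U, the number of return words over w is exactly 2. -/

import Mathlib

/-- `w` occurs in the infinite word `U` at position `i`. -/
def OccursAt {A : Type*} (U : ℕ → A) (w : List A) (i : ℕ) : Prop :=
  ∀ j : Fin w.length, U (i + j) = w.get j

/-- `w` is a factor of the infinite word `U`. -/
def IsFactor {A : Type*} (U : ℕ → A) (w : List A) : Prop := ∃ i, OccursAt U w i

/-- `U` is recurrent: every factor occurs infinitely often. -/
def Recurrent {A : Type*} (U : ℕ → A) : Prop :=
  ∀ w, IsFactor U w → ∀ N, ∃ i, N ≤ i ∧ OccursAt U w i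

/-- The set of return words over `w` in `U`: words starting at an occurrence of `w`
and ending just before the next occurrence. -/
def ReturnWords {A : Type*} (U : ℕ → A) (w : List A) : Set (List A) :=
  {r | ∃ i j, OccursAt U w i ∧ OccursAt U w j ∧ i < j ∧
      (∀ t, i < t → t < j → ¬ OccursAt U w t) ∧
      r = List.ofFn (fun t : Fin (j - i) => U (i + t))}

/-- The complexity function: number of distinct factors of length `n`. -/
noncomputable def Complexity {A : Type*} (U : ℕ → A) (n : ℕ) : ℕ :=
  Set.ncard {w : List A | w.length = n ∧ IsFactor U w}

namespace StP

variable {A : Type*}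

def Win (U : ℕ → A) (i m : ℕ) : List A := List.ofFn (fun t : Fin m => U (i + t))

@[simp] lemma length_Win (U : ℕ → A) (i m : ℕ) : (Win U i m).length = m :=
  List.length_ofFn

@[simp] lemma Win_getElem (U : ℕ → A) (i m t : ℕ) (h : t < (Win U i m).length) :
    (Win U i m)[t] = U (i + t) := by
  simp [Win, List.getElem_ofFn]

lemma Win_eq_Win {U : ℕ → A} {i j m : ℕ} (h : ∀ t, t < m → U (i + t) = U (j + t)) :
    Win U i m = Win U j m := by
  apply List.ext_getElem (by simp)
  intro t h1 h2
  rw [Win_getElem, Win_getElem]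
  exact h t (by simpa using h1)

lemma eq_of_Win_eq {U : ℕ → A} {i j m : ℕ} (h : Win U i m = Win U j m)
    {t : ℕ} (ht : t < m) : U (i + t) = U (j + t) := by
  have h1 := List.getElem_of_eq h (by simpa : t < (Win U i m).length)
  simpa using h1

lemma occursAt_iff {U : ℕ → A} {w : List A} {i : ℕ} :
    OccursAt U w i ↔ w = Win U i w.length := by
  constructor
  · intro h
    apply List.ext_getElem (by simp)
    intro t h1 h2
    rw [Win_getElem]
    exact (h ⟨t, h1⟩).symm
  · intro h j
    have h2 := List.getElem_of_eq h j.isLt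
    rw [List.get_eq_getElem, h2, Win_getElem]

lemma occursAt_Win (U : ℕ → A) (i m : ℕ) : OccursAt U (Win U i m) i := by
  rw [occursAt_iff]; simp

lemma isFactor_Win (U : ℕ → A) (i m : ℕ) : IsFactor U (Win U i m) :=
  ⟨i, occursAt_Win U i m⟩

lemma isFactor_iff {U : ℕ → A} {w : List A} :
    IsFactor U w ↔ ∃ i, w = Win U i w.length := by
  unfold IsFactor; simp only [occursAt_iff]

lemma Win_succ (U : ℕ → A) (i m : ℕ) :
    Win U i (m + 1) = Win U i m ++ [U (i + m)] := by
  apply List.ext_getElem (by simp)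
  intro t h1 h2
  rcases Nat.lt_or_ge t m with h | h
  · rw [List.getElem_append_left (by simpa using h), Win_getElem, Win_getElem]
  · have ht : t = m := by simp at h1; omega
    subst ht
    rw [List.getElem_append_right (by simp), Win_getElem]
    simp

lemma Win_succ' (U : ℕ → A) (i m : ℕ) :
    Win U i (m + 1) = U i :: Win U (i + 1) m := by
  apply List.ext_getElem (by simp)
  intro t h1 h2
  rcases Nat.eq_zero_or_pos t with h | h
  · subst h; simp
  · obtain ⟨t', rfl⟩ := Nat.exists_eq_add_of_lt h
    rw [Win_getElem]
    simp only [Nat.zero_add, List.getElem_cons_succ, Win_getElem]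
    congr 1
    omega

lemma Win_take (U : ℕ → A) (i : ℕ) {m M : ℕ} (h : m ≤ M) :
    (Win U i M).take m = Win U i m := by
  apply List.ext_getElem (by simp [h])
  intro t h1 h2
  rw [List.getElem_take, Win_getElem, Win_getElem]

lemma Win_drop (U : ℕ → A) (i : ℕ) (k : ℕ) (M : ℕ) :
    (Win U i M).drop k = Win U (i + k) (M - k) := by
  apply List.ext_getElem (by simp)
  intro t h1 h2
  rw [List.getElem_drop, Win_getElem, Win_getElem]
  congr 1
  omega

lemma Win_sub {U : ℕ → A} {i j M : ℕ} (h : Win U i M = Win U j M)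
    {k m : ℕ} (hkm : k + m ≤ M) : Win U (i + k) m = Win U (j + k) m := by
  apply Win_eq_Win
  intro t ht
  have := eq_of_Win_eq h (t := k + t) (by omega)
  simpa [Nat.add_assoc] using this

end StP

namespace StP

open Classical in
noncomputable def nxt (U : ℕ → A) (w : List A) (p : ℕ) : ℕ :=
  sInf {j | p < j ∧ OccursAt U w j}

open Classical in
noncomputable def en (U : ℕ → A) (w : List A) : ℕ → ℕ
  | 0 => sInf {j | OccursAt U w j}
  | k + 1 => nxt U w (en U w k)

section OccEnum

variable {U : ℕ → A} {w : List A} (hrec : Recurrent U) (hw : IsFactor U w)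
include hrec hw
set_option linter.unusedSectionVars false

lemma nxt_spec (p : ℕ) :
    p < nxt U w p ∧ OccursAt U w (nxt U w p) ∧
      ∀ t, p < t → t < nxt U w p → ¬ OccursAt U w t := by
  have hne : {j | p < j ∧ OccursAt U w j}.Nonempty := by
    obtain ⟨i, hi, ho⟩ := hrec w hw (p + 1)
    exact ⟨i, by omega, ho⟩
  have hmem := Nat.sInf_mem hne
  refine ⟨hmem.1, hmem.2, fun t h1 h2 ho => ?_⟩
  exact Nat.notMem_of_lt_sInf h2 ⟨h1, ho⟩

lemma en_zero_occ : OccursAt U w (en U w 0) := by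
  have hne : {j | OccursAt U w j}.Nonempty := hw
  exact Nat.sInf_mem hne

lemma en_zero_le {p : ℕ} (hp : OccursAt U w p) : en U w 0 ≤ p := Nat.sInf_le hp

lemma en_occ : ∀ k, OccursAt U w (en U w k)
  | 0 => en_zero_occ hrec hw
  | k + 1 => (nxt_spec hrec hw (en U w k)).2.1

lemma en_lt_succ (k : ℕ) : en U w k < en U w (k + 1) :=
  (nxt_spec hrec hw (en U w k)).1

lemma en_between (k : ℕ) :
    ∀ t, en U w k < t → t < en U w (k + 1) → ¬ OccursAt U w t :=
  (nxt_spec hrec hw (en U w k)).2.2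

lemma en_strictMono : StrictMono (en U w) :=
  strictMono_nat_of_lt_succ (en_lt_succ hrec hw)

lemma en_surj {p : ℕ} (hp : OccursAt U w p) : ∃ k, en U w k = p := by
  classical
  set P : ℕ → Prop := fun k => en U w k ≤ p with hP
  have h0 : P 0 := en_zero_le hrec hw hp
  have henk : ∀ k, k ≤ en U w k := fun k => (en_strictMono hrec hw).le_apply
  have hKb : ∀ k, P k → k ≤ p := fun k hk => le_trans (henk k) hk
  set K := Nat.findGreatest P p with hK
  have hPK : P K := Nat.findGreatest_spec (P := P) (Nat.zero_le p) h0
  rcases eq_or_lt_of_le hPK with h | h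
  · exact ⟨K, h⟩
  · exfalso
    have hnext : en U w (K + 1) ≤ p := Nat.sInf_le ⟨h, hp⟩
    have : K + 1 ≤ p := le_trans (henk (K + 1)) hnext
    exact Nat.findGreatest_is_greatest (lt_add_one K) this hnext

/-- locate a point inside the block structure -/
lemma en_loc {k0 x : ℕ} (hx : en U w k0 ≤ x) :
    ∃ k, k0 ≤ k ∧ en U w k ≤ x ∧ x < en U w (k + 1) := by
  classical
  set P : ℕ → Prop := fun k => en U w k ≤ x with hP
  have henk : ∀ k, k ≤ en U w k := fun k => (en_strictMono hrec hw).le_apply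
  set K := Nat.findGreatest P x with hK
  have hPK : P K := Nat.findGreatest_spec (P := P) (le_trans (henk k0) hx) hx
  refine ⟨K, Nat.le_findGreatest (le_trans (henk k0) hx) hx, hPK, ?_⟩
  by_contra hcon
  push_neg at hcon
  have : K + 1 ≤ x := le_trans (henk (K + 1)) hcon
  exact Nat.findGreatest_is_greatest (lt_add_one K) this hcon

noncomputable def ret (U : ℕ → A) (w : List A) (k : ℕ) : List A :=
  Win U (en U w k) (en U w (k + 1) - en U w k)

lemma ret_mem (k : ℕ) : ret U w k ∈ ReturnWords U w := by
  refine ⟨en U w k, en U w (k + 1), en_occ hrec hw k, en_occ hrec hw (k + 1),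
    en_lt_succ hrec hw k, en_between hrec hw k, rfl⟩

lemma ret_length (k : ℕ) :
    en U w (k + 1) = en U w k + (ret U w k).length := by
  have := en_lt_succ hrec hw k
  simp only [ret, length_Win]
  omega

/-- Every return word comes from a pair of *consecutive* occurrences, where the second
is the `nxt` of the first. -/
lemma return_eq_win {r : List A} (hr : r ∈ ReturnWords U w) :
    ∃ i j, OccursAt U w i ∧ j = nxt U w i ∧ i < j ∧ r = Win U i (j - i) ∧
      OccursAt U w j ∧ (∀ t, i < t → t < j → ¬ OccursAt U w t) := by
  obtain ⟨i, j, hi, hj, hij, hbet, hr⟩ := hr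
  refine ⟨i, j, hi, ?_, hij, hr, hj, hbet⟩
  have h1 : nxt U w i ≤ j := Nat.sInf_le ⟨hij, hj⟩
  have h2 := nxt_spec hrec hw i
  rcases eq_or_lt_of_le h1 with h | h
  · exact h.symm
  · exact absurd h2.2.1 (hbet _ h2.1 h)

lemma return_pos {r : List A} (hr : r ∈ ReturnWords U w) : 0 < r.length := by
  obtain ⟨i, j, _, _, hij, hr, _, _⟩ := return_eq_win hrec hw hr
  rw [hr]
  simp
  omega

end OccEnum

end StP

namespace StP

variable {A : Type*}

section Helpers

variable {U : ℕ → A} {w : List A}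

lemma occursAt_prefix {v : List A} {p : ℕ} (hp : w <+: v) (h : OccursAt U v p) :
    OccursAt U w p := by
  rw [occursAt_iff] at h ⊢
  obtain ⟨t, rfl⟩ := hp
  have : w = (w ++ t).take w.length := by simp
  rw [this, h, Win_take _ _ (by simp)]
  simp

lemma occursAt_cons {b : A} {p : ℕ} (h : OccursAt U (b :: w) p) :
    OccursAt U w (p + 1) ∧ U p = b := by
  rw [occursAt_iff] at h
  rw [List.length_cons, Win_succ'] at h
  constructor
  · rw [occursAt_iff]
    exact (List.cons_eq_cons.mp h).2
  · exact (List.cons_eq_cons.mp h).1.symm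

lemma occursAt_append_elem {p : ℕ} (h : OccursAt U w p) {c : A}
    (hc : U (p + w.length) = c) : OccursAt U (w ++ [c]) p := by
  rw [occursAt_iff] at h ⊢
  rw [List.length_append, List.length_singleton, Win_succ, ← h, hc]

lemma mem_returns_of_occ (hrec : Recurrent U) (hw : IsFactor U w) {p : ℕ}
    (hp : OccursAt U w p) : Win U p (nxt U w p - p) ∈ ReturnWords U w := by
  obtain ⟨h1, h2, h3⟩ := nxt_spec hrec hw (w := w) p
  exact ⟨p, nxt U w p, hp, h2, h1, h3, rfl⟩

/-- the letter following the occurrence of `w` at the start of a return word -/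
noncomputable def fol (U : ℕ → A) (w : List A) (r : List A) : A :=
  (r ++ w).getD w.length (U 0)

/-- the final letter of a return word -/
noncomputable def lst (U : ℕ → A) (r : List A) : A :=
  r.getD (r.length - 1) (U 0)

lemma fol_spec {i j : ℕ} (hi : OccursAt U w i) (hj : OccursAt U w j)
    (hij : i < j) : fol U w (Win U i (j - i)) = U (i + w.length) := by
  set n := w.length
  set d := j - i with hd
  have hdpos : 0 < d := by omega
  unfold fol
  rcases Nat.lt_or_ge n d with h | h
  · rw [List.getD_eq_getElem _ _ (by simp; omega), List.getElem_append_left (by simpa using h),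
      Win_getElem]
  · rw [List.getD_eq_getElem _ _ (by simp; omega), List.getElem_append_right (by simp; omega)]
    have hocc := occursAt_iff.mp hj
    have : w[n - (Win U i d).length]'(by simp; omega) =
        (Win U j n)[n - d]'(by simp; omega) := by
      simp only [length_Win]
      exact List.getElem_of_eq hocc (Nat.sub_lt (by omega) hdpos)
    rw [this, Win_getElem]
    congr 1
    omega

lemma lst_spec {i j : ℕ} (hij : i < j) : lst U (Win U i (j - i)) = U (j - 1) := by
  unfold lst
  rw [List.getD_eq_getElem _ _ (by simp; omega), Win_getElem]
  congr 1
  simp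
  omega

lemma fol_surj (hrec : Recurrent U) (hw : IsFactor U w) {c : A}
    (hc : IsFactor U (w ++ [c])) : ∃ r ∈ ReturnWords U w, fol U w r = c := by
  obtain ⟨p, hp⟩ := hc
  have hpw : OccursAt U w p := occursAt_prefix (List.prefix_append w [c]) hp
  have hcval : U (p + w.length) = c := by
    have h1 := hp ⟨w.length, by simp⟩
    simpa using h1
  obtain ⟨h1, h2, h3⟩ := nxt_spec hrec hw (w := w) p
  exact ⟨_, mem_returns_of_occ hrec hw hpw, by rw [fol_spec hpw h2 h1, hcval]⟩

lemma lst_surj (hrec : Recurrent U) (hw : IsFactor U w) {b : A}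
    (hb : IsFactor U (b :: w)) : ∃ r ∈ ReturnWords U w, lst U r = b := by
  obtain ⟨p, hple, hp⟩ := hrec _ hb (en U w 0)
  obtain ⟨hpw, hbval⟩ := occursAt_cons hp
  obtain ⟨k, hk⟩ := en_surj hrec hw hpw
  have hk0 : k ≠ 0 := by
    intro h
    rw [h] at hk
    omega
  obtain ⟨k', rfl⟩ := Nat.exists_eq_succ_of_ne_zero hk0
  refine ⟨ret U w k', ret_mem hrec hw k', ?_⟩
  unfold ret
  rw [lst_spec (en_lt_succ hrec hw k'), hk]
  simpa using hbval

lemma fol_ret (hrec : Recurrent U) (hw : IsFactor U w) (k : ℕ) :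
    fol U w (ret U w k) = U (en U w k + w.length) :=
  fol_spec (en_occ hrec hw k) (en_occ hrec hw (k + 1)) (en_lt_succ hrec hw k)

lemma lst_ret (hrec : Recurrent U) (hw : IsFactor U w) (k : ℕ) :
    lst U (ret U w k) = U (en U w (k + 1) - 1) :=
  lst_spec (en_lt_succ hrec hw k)

/-- If all return words over a factor coincide, the word is ultimately periodic. -/
lemma periodic_of_unique_return (hrec : Recurrent U) (hw : IsFactor U w) {r0 : List A}
    (huniq : ∀ r ∈ ReturnWords U w, r = r0) :
    ∃ p : ℕ, 0 < p ∧ ∃ N : ℕ, ∀ n ≥ N, U (n + p) = U n := by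
  set L := r0.length with hL
  have hLpos : 0 < L := by
    have h1 := en_lt_succ hrec hw (w := w) 0
    have h2 := ret_length hrec hw (w := w) 0
    rw [huniq _ (ret_mem hrec hw 0)] at h2
    omega
  have hgap : ∀ k, en U w (k + 1) = en U w k + L := by
    intro k
    have h1 := ret_length hrec hw (w := w) k
    rw [huniq _ (ret_mem hrec hw k)] at h1
    exact h1
  have hval : ∀ k t, t < L → U (en U w k + t) = r0.getD t (U 0) := by
    intro k t ht
    have h1 : ret U w k = r0 := huniq _ (ret_mem hrec hw k)
    have h2 : U (en U w k + t) = (ret U w k)[t]'(by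
        simp only [ret, length_Win]; have := hgap k; omega) := by
      simp [ret]
    rw [h2, List.getElem_of_eq h1, List.getD_eq_getElem _ _ (by omega)]
  refine ⟨L, hLpos, en U w 0, fun x hx => ?_⟩
  obtain ⟨k, _, hk1, hk2⟩ := en_loc hrec hw hx
  rw [hgap k] at hk2
  obtain ⟨t, rfl⟩ := Nat.exists_eq_add_of_le hk1
  have ht : t < L := by omega
  rw [hval k t ht]
  have : en U w k + t + L = en U w (k + 1) + t := by rw [hgap k]; omega
  rw [this, hval (k + 1) t ht]

end Helpers

end StP

namespace StP

variable {A : Type*}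

section Complexity

variable {U : ℕ → A}

lemma factors_eq_range (U : ℕ → A) (n : ℕ) :
    {w : List A | w.length = n ∧ IsFactor U w} = Set.range (fun i => Win U i n) := by
  ext w
  simp only [Set.mem_setOf_eq, Set.mem_range]
  constructor
  · rintro ⟨hlen, i, hocc⟩
    exact ⟨i, by rw [← hlen]; exact (occursAt_iff.mp hocc).symm⟩
  · rintro ⟨i, rfl⟩
    exact ⟨by simp, isFactor_Win U i n⟩

lemma finite_factors [Finite A] (U : ℕ → A) (n : ℕ) :
    (Set.range fun i => Win U i n).Finite := by
  apply Set.Finite.subset (Set.finite_range (List.ofFn : (Fin n → A) → List A))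
  rintro w ⟨i, rfl⟩
  exact ⟨fun t => U (i + t), rfl⟩

lemma complexity_eq (U : ℕ → A) (n : ℕ) :
    Complexity U n = (Set.range fun i => Win U i n).ncard := by
  rw [Complexity, factors_eq_range]

open Classical in
/-- a right extension of a factor, chosen by choice -/
noncomputable def eext (U : ℕ → A) (v : List A) : A :=
  if h : IsFactor U v then U (Classical.choose h + v.length) else U 0

lemma eext_spec {v : List A} (hv : IsFactor U v) : IsFactor U (v ++ [eext U v]) := by
  rw [eext, dif_pos hv]
  exact ⟨Classical.choose hv, occursAt_append_elem (Classical.choose_spec hv) rfl⟩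

lemma emap_mem {v : List A} (hv : IsFactor U v) {c : A} (hc : IsFactor U (v ++ [c])) :
    v ++ [c] ∈ Set.range (fun i => Win U i (v.length + 1)) := by
  rw [← factors_eq_range]
  exact ⟨by simp, hc⟩

lemma emap_injOn (m : ℕ) :
    Set.InjOn (fun v => v ++ [eext U v]) (Set.range fun i => Win U i m) := by
  rintro x hx y hy hxy
  simpa using List.append_inj_left' hxy (by simp)

/-- If there are two distinct right special factors of length m,
complexity jumps by at least 2. Also used with `u = v` impossible;
a more primitive version: adding extra extensions. -/
lemma compl_ge_of_RS2 [Finite A] {m : ℕ} {u v : List A}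
    (hu : IsFactor U u) (hv : IsFactor U v) (huv : u ≠ v)
    (hul : u.length = m) (hvl : v.length = m)
    (hua : ∃ a b, a ≠ b ∧ IsFactor U (u ++ [a]) ∧ IsFactor U (u ++ [b]))
    (hva : ∃ a b, a ≠ b ∧ IsFactor U (v ++ [a]) ∧ IsFactor U (v ++ [b])) :
    Complexity U m + 2 ≤ Complexity U (m + 1) := by
  classical
  obtain ⟨a, b, hab, ha, hb⟩ := hua
  obtain ⟨a', b', hab', ha', hb'⟩ := hva
  -- choose extension different from the canonical one
  obtain ⟨cu, hcu, hcune⟩ : ∃ c, IsFactor U (u ++ [c]) ∧ c ≠ eext U u := by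
    by_cases h : a = eext U u
    · exact ⟨b, hb, by rw [← h]; exact hab.symm⟩
    · exact ⟨a, ha, h⟩
  obtain ⟨cv, hcv, hcvne⟩ : ∃ c, IsFactor U (v ++ [c]) ∧ c ≠ eext U v := by
    by_cases h : a' = eext U v
    · exact ⟨b', hb', by rw [← h]; exact hab'.symm⟩
    · exact ⟨a', ha', h⟩
  set S : Set (List A) := Set.range fun i => Win U i m with hS
  set g : List A → List A := fun v => v ++ [eext U v] with hg
  have hSfin : S.Finite := finite_factors U m
  have hgS : g '' S ⊆ Set.range fun i => Win U i (m + 1) := by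
    rintro x ⟨z, ⟨i, rfl⟩, rfl⟩
    have := emap_mem (isFactor_Win U i m) (eext_spec (isFactor_Win U i m))
    simpa using this
  have huS : u ∈ S := by rw [hS, ← factors_eq_range]; exact ⟨hul, hu⟩
  have hvS : v ∈ S := by rw [hS, ← factors_eq_range]; exact ⟨hvl, hv⟩
  have hune : u ++ [cu] ∉ g '' S := by
    rintro ⟨z, hz, hzz⟩
    have h1 : z = u := by simpa using List.append_inj_left' hzz (by simp)
    rw [h1] at hzz
    have h3 : [eext U u] = [cu] := List.append_inj_right' hzz rfl
    exact hcune (by simpa using h3.symm)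
  have hvne : v ++ [cv] ∉ g '' S := by
    rintro ⟨z, hz, hzz⟩
    have h1 : z = v := by simpa using List.append_inj_left' hzz (by simp)
    rw [h1] at hzz
    have h3 : [eext U v] = [cv] := List.append_inj_right' hzz rfl
    exact hcvne (by simpa using h3.symm)
  have hne2 : u ++ [cu] ≠ v ++ [cv] := by
    intro h
    exact huv (by simpa using List.append_inj_left' h (by simp))
  have hbig : insert (u ++ [cu]) (insert (v ++ [cv]) (g '' S)) ⊆
      Set.range fun i => Win U i (m + 1) := by
    intro x hx
    rcases hx with rfl | rfl | hx
    · have := emap_mem hu hcu; rw [hul] at this; exact this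
    · have := emap_mem hv hcv; rw [hvl] at this; exact this
    · exact hgS hx
  have hcard : (insert (u ++ [cu]) (insert (v ++ [cv]) (g '' S))).ncard =
      S.ncard + 2 := by
    rw [Set.ncard_insert_of_notMem (by simp [hne2, hune])
        ((hSfin.image g).insert _),
      Set.ncard_insert_of_notMem hvne (hSfin.image g),
      Set.ncard_image_of_injOn (emap_injOn m)]
  rw [complexity_eq, complexity_eq, ← hcard]
  exact Set.ncard_le_ncard hbig (finite_factors U (m + 1))

/-- one right special factor forces complexity increase -/
lemma compl_ge_of_RS1 [Finite A] {m : ℕ} {u : List A}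
    (hu : IsFactor U u) (hul : u.length = m)
    (hua : ∃ a b, a ≠ b ∧ IsFactor U (u ++ [a]) ∧ IsFactor U (u ++ [b])) :
    Complexity U m + 1 ≤ Complexity U (m + 1) := by
  classical
  obtain ⟨a, b, hab, ha, hb⟩ := hua
  obtain ⟨cu, hcu, hcune⟩ : ∃ c, IsFactor U (u ++ [c]) ∧ c ≠ eext U u := by
    by_cases h : a = eext U u
    · exact ⟨b, hb, by rw [← h]; exact hab.symm⟩
    · exact ⟨a, ha, h⟩
  set S : Set (List A) := Set.range fun i => Win U i m with hS
  set g : List A → List A := fun v => v ++ [eext U v] with hg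
  have hSfin : S.Finite := finite_factors U m
  have hgS : g '' S ⊆ Set.range fun i => Win U i (m + 1) := by
    rintro x ⟨z, ⟨i, rfl⟩, rfl⟩
    have := emap_mem (isFactor_Win U i m) (eext_spec (isFactor_Win U i m))
    simpa using this
  have hune : u ++ [cu] ∉ g '' S := by
    rintro ⟨z, hz, hzz⟩
    have h1 : z = u := by simpa using List.append_inj_left' hzz (by simp)
    rw [h1] at hzz
    have h3 : [eext U u] = [cu] := List.append_inj_right' hzz rfl
    exact hcune (by simpa using h3.symm)
  have hbig : insert (u ++ [cu]) (g '' S) ⊆ Set.range fun i => Win U i (m + 1) := by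
    intro x hx
    rcases hx with rfl | hx
    · have := emap_mem hu hcu; rw [hul] at this; exact this
    · exact hgS hx
  have hcard : (insert (u ++ [cu]) (g '' S)).ncard = S.ncard + 1 := by
    rw [Set.ncard_insert_of_notMem hune (hSfin.image g),
      Set.ncard_image_of_injOn (emap_injOn m)]
  rw [complexity_eq, complexity_eq, ← hcard]
  exact Set.ncard_le_ncard hbig (finite_factors U (m + 1))

end Complexity

end StP

namespace StP

variable {A : Type*}

section Complexity2

variable {U : ℕ → A}

lemma take_mem_factors {x : List A} {m : ℕ}
    (hx : x ∈ Set.range fun i => Win U i (m + 1)) :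
    x.take m ∈ Set.range fun i => Win U i m := by
  obtain ⟨i, rfl⟩ := hx
  exact ⟨i, (Win_take U i (by omega)).symm⟩

lemma factor_decomp {x : List A} {m : ℕ}
    (hx : x ∈ Set.range fun i => Win U i (m + 1)) :
    ∃ c, x = x.take m ++ [c] ∧ IsFactor U (x.take m ++ [c]) ∧
      IsFactor U (x.take m) := by
  obtain ⟨i, rfl⟩ := hx
  refine ⟨U (i + m), ?_, ?_, ?_⟩
  · rw [Win_take U i (by omega), ← Win_succ]
  · rw [Win_take U i (by omega), ← Win_succ]
    exact isFactor_Win U i (m + 1)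
  · rw [Win_take U i (by omega)]
    exact isFactor_Win U i m

/-- If `u` is the unique right special factor of length `m`, with only extensions
`a` and `b`, complexity grows by at most one. -/
lemma compl_le_of_unique_RS [Finite A] {m : ℕ} {u : List A} {a b : A} (hab : a ≠ b)
    (hext : ∀ c, IsFactor U (u ++ [c]) → c = a ∨ c = b)
    (huniq : ∀ z : List A, z.length = m → IsFactor U z →
      (∃ c d, c ≠ d ∧ IsFactor U (z ++ [c]) ∧ IsFactor U (z ++ [d])) → z = u) :
    Complexity U (m + 1) ≤ Complexity U m + 1 := by
  classical
  set T : Set (List A) := Set.range fun i => Win U i (m + 1) with hT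
  have hTfin : T.Finite := finite_factors U (m + 1)
  have hinj : Set.InjOn (fun v => v.take m) (T \ {u ++ [b]}) := by
    rintro x ⟨hx, hxne⟩ y ⟨hy, hyne⟩ hxy
    obtain ⟨cx, hx1, hx2, hx3⟩ := factor_decomp hx
    obtain ⟨cy, hy1, hy2, hy3⟩ := factor_decomp hy
    simp only at hxy
    by_cases hcc : cx = cy
    · rw [hx1, hy1, hxy, hcc]
    · have hzRS : x.take m = u := by
        apply huniq _ _ hx3 ⟨cx, cy, hcc, hx2, by rw [hxy]; exact hy2⟩
        obtain ⟨i, rfl⟩ := hx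
        simp
      have hcx : cx = a ∨ cx = b := hext cx (by rw [← hzRS]; exact hx2)
      have hcy : cy = a ∨ cy = b := hext cy (by rw [← hzRS, hxy]; exact hy2)
      exfalso
      rcases hcx with rfl | rfl
      · rcases hcy with rfl | rfl
        · exact hcc rfl
        · exact hyne (by simp only [Set.mem_singleton_iff]; rw [hy1, ← hxy, hzRS])
      · exact hxne (by simp only [Set.mem_singleton_iff]; rw [hx1, hzRS])
  have himg : (fun v : List A => v.take m) '' (T \ {u ++ [b]}) ⊆
      Set.range fun i => Win U i m := by
    rintro z ⟨x, ⟨hx, _⟩, rfl⟩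
    exact take_mem_factors hx
  have h1 : T.ncard ≤ (T \ {u ++ [b]}).ncard + 1 := by
    have hsub : T ⊆ insert (u ++ [b]) (T \ {u ++ [b]}) := by
      intro x hx
      by_cases h : x = u ++ [b]
      · exact Or.inl h
      · exact Or.inr ⟨hx, h⟩
    calc T.ncard ≤ (insert (u ++ [b]) (T \ {u ++ [b]})).ncard :=
          Set.ncard_le_ncard hsub ((hTfin.diff).insert _)
      _ ≤ (T \ {u ++ [b]}).ncard + 1 := Set.ncard_insert_le _ _
  have h2 : (T \ {u ++ [b]}).ncard ≤ Complexity U m := by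
    rw [complexity_eq]
    rw [← Set.ncard_image_of_injOn hinj]
    exact Set.ncard_le_ncard himg (finite_factors U m)
  rw [complexity_eq (n := m + 1), ← hT]
  omega

/-- Morse–Hedlund-type argument: no right special factor of length `m` forces
ultimate periodicity. -/
lemma periodic_of_no_RS [Finite A] {m : ℕ}
    (hdet : ∀ z : List A, z.length = m → IsFactor U z →
      ∀ c d, IsFactor U (z ++ [c]) → IsFactor U (z ++ [d]) → c = d) :
    ∃ p : ℕ, 0 < p ∧ ∃ N : ℕ, ∀ n ≥ N, U (n + p) = U n := by
  have hdet' : ∀ i j : ℕ, Win U i m = Win U j m → U (i + m) = U (j + m) := by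
    intro i j hij
    apply hdet (Win U i m) (by simp) (isFactor_Win U i m)
    · rw [← Win_succ]; exact isFactor_Win U i (m + 1)
    · rw [hij, ← Win_succ]; exact isFactor_Win U j (m + 1)
  set F : ℕ → (Fin m → A) := fun k t => U (k + t) with hF
  obtain ⟨x', y', hne, heq⟩ := Finite.exists_ne_map_eq_of_infinite F
  have key : ∀ x y : ℕ, F x = F y → ∀ t, Win U (x + t) m = Win U (y + t) m := by
    intro x y hxy t
    induction t with
    | zero =>
      apply Win_eq_Win
      intro s hs
      simpa using congrFun hxy ⟨s, hs⟩
    | succ t ih =>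
      have hUt := hdet' _ _ ih
      apply Win_eq_Win
      intro s hs
      rcases Nat.lt_or_ge (s + 1) m with h | h
      · have := eq_of_Win_eq ih (t := s + 1) h
        have e1 : x + t + (s + 1) = x + (t + 1) + s := by omega
        have e2 : y + t + (s + 1) = y + (t + 1) + s := by omega
        rwa [e1, e2] at this
      · have hsm : s + 1 = m := by omega
        have e1 : x + t + m = x + (t + 1) + s := by omega
        have e2 : y + t + m = y + (t + 1) + s := by omega
        rwa [e1, e2] at hUt
  rcases Nat.lt_or_ge x' y' with hlt | hge
  · refine ⟨y' - x', by omega, x' + m, fun n hn => ?_⟩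
    obtain ⟨t, rfl⟩ := Nat.exists_eq_add_of_le hn
    have := hdet' _ _ (key x' y' heq t)
    have e1 : x' + t + m = x' + m + t := by omega
    have e2 : y' + t + m = x' + m + t + (y' - x') := by omega
    rw [e1, e2] at this
    exact this.symm
  · have hgt : y' < x' := by omega
    refine ⟨x' - y', by omega, y' + m, fun n hn => ?_⟩
    obtain ⟨t, rfl⟩ := Nat.exists_eq_add_of_le hn
    have := hdet' _ _ (key y' x' heq.symm t)
    have e1 : y' + t + m = y' + m + t := by omega
    have e2 : x' + t + m = y' + m + t + (x' - y') := by omega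
    rw [e1, e2] at this
    exact this.symm

end Complexity2

end StP

namespace StP

variable {A : Type*}

section Forward

variable {U : ℕ → A}

/-- right special predicate (with a pair of distinct extensions) -/
def RS (U : ℕ → A) (z : List A) : Prop :=
  IsFactor U z ∧ ∃ c d, c ≠ d ∧ IsFactor U (z ++ [c]) ∧ IsFactor U (z ++ [d])

lemma compl_ge_of_3ext [Finite A] {m : ℕ} {u : List A}
    (hu : IsFactor U u) (hul : u.length = m) {c d e : A}
    (hcd : c ≠ d) (hce : c ≠ e) (hde : d ≠ e)
    (hc : IsFactor U (u ++ [c])) (hd : IsFactor U (u ++ [d]))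
    (he : IsFactor U (u ++ [e])) :
    Complexity U m + 2 ≤ Complexity U (m + 1) := by
  classical
  obtain ⟨c1, c2, hc12, h1, h2⟩ :
      ∃ c1 c2, c1 ≠ c2 ∧ (IsFactor U (u ++ [c1]) ∧ c1 ≠ eext U u) ∧
        (IsFactor U (u ++ [c2]) ∧ c2 ≠ eext U u) := by
    by_cases h : c = eext U u
    · exact ⟨d, e, hde, ⟨hd, by rw [← h]; exact hcd.symm⟩, ⟨he, by rw [← h]; exact hce.symm⟩⟩
    · by_cases h' : d = eext U u
      · exact ⟨c, e, hce, ⟨hc, h⟩, ⟨he, by rw [← h']; exact hde.symm⟩⟩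
      · exact ⟨c, d, hcd, ⟨hc, h⟩, ⟨hd, h'⟩⟩
  set S : Set (List A) := Set.range fun i => Win U i m with hS
  set g : List A → List A := fun v => v ++ [eext U v] with hg
  have hSfin : S.Finite := finite_factors U m
  have hgS : g '' S ⊆ Set.range fun i => Win U i (m + 1) := by
    rintro x ⟨z, ⟨i, rfl⟩, rfl⟩
    have := emap_mem (isFactor_Win U i m) (eext_spec (isFactor_Win U i m))
    simpa using this
  have hkey : ∀ c', IsFactor U (u ++ [c']) → c' ≠ eext U u → u ++ [c'] ∉ g '' S := by
    rintro c' _ hne ⟨z, hz, hzz⟩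
    have h1 : z = u := by simpa using List.append_inj_left' hzz (by simp)
    rw [h1] at hzz
    have h3 : [eext U u] = [c'] := List.append_inj_right' hzz rfl
    exact hne (by simpa using h3.symm)
  have hne2 : u ++ [c1] ≠ u ++ [c2] := by
    intro h
    have h3 : [c1] = [c2] := List.append_inj_right' h rfl
    exact hc12 (by simpa using h3)
  have hbig : insert (u ++ [c1]) (insert (u ++ [c2]) (g '' S)) ⊆
      Set.range fun i => Win U i (m + 1) := by
    intro x hx
    rcases hx with rfl | rfl | hx
    · have := emap_mem hu h1.1; rw [hul] at this; exact this
    · have := emap_mem hu h2.1; rw [hul] at this; exact this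
    · exact hgS hx
  have hcard : (insert (u ++ [c1]) (insert (u ++ [c2]) (g '' S))).ncard =
      S.ncard + 2 := by
    rw [Set.ncard_insert_of_notMem (by simp [hne2, hkey c1 h1.1 h1.2])
        ((hSfin.image g).insert _),
      Set.ncard_insert_of_notMem (hkey c2 h2.1 h2.2) (hSfin.image g),
      Set.ncard_image_of_injOn (emap_injOn m)]
  rw [complexity_eq, complexity_eq, ← hcard]
  exact Set.ncard_le_ncard hbig (finite_factors U (m + 1))

variable [Finite A] (hcompl : ∀ n : ℕ, Complexity U n = n + 1)
include hcompl

lemma RS_unique {m : ℕ} {z z' : List A} (hz : RS U z) (hz' : RS U z')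
    (hzl : z.length = m) (hz'l : z'.length = m) : z = z' := by
  by_contra hne
  have := compl_ge_of_RS2 hz.1 hz'.1 hne hzl hz'l hz.2 hz'.2
  rw [hcompl m, hcompl (m + 1)] at this
  omega

lemma no_3ext {m : ℕ} {u : List A} (hu : IsFactor U u) (hul : u.length = m)
    {c d e : A} (hcd : c ≠ d) (hce : c ≠ e) (hde : d ≠ e)
    (hc : IsFactor U (u ++ [c])) (hd : IsFactor U (u ++ [d]))
    (he : IsFactor U (u ++ [e])) : False := by
  have := compl_ge_of_3ext hu hul hcd hce hde hc hd he
  rw [hcompl m, hcompl (m + 1)] at this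
  omega

end Forward

section RSdrop

variable {U : ℕ → A}

lemma RS_win_drop {i M k : ℕ} (hk : k ≤ M) (h : RS U (Win U i M)) :
    RS U (Win U (i + k) (M - k)) := by
  obtain ⟨hf, c, d, hcd, hc, hd⟩ := h
  have key : ∀ c', IsFactor U (Win U i M ++ [c']) →
      IsFactor U (Win U (i + k) (M - k) ++ [c']) := by
    intro c' hc'
    obtain ⟨q, hq⟩ := hc'
    rw [occursAt_iff] at hq
    have hlen : (Win U i M ++ [c']).length = M + 1 := by simp
    rw [hlen] at hq
    have hWq : Win U i M = Win U q M := by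
      have := congrArg (List.take M) hq
      rw [Win_take U q (by omega)] at this
      simpa using this
    have hc'q : c' = U (q + M) := by
      have := List.getElem_of_eq hq (by simp : M < (Win U i M ++ [c']).length)
      rw [List.getElem_append_right (by simp)] at this
      simpa using this
    have hwin : Win U (i + k) (M - k) = Win U (q + k) (M - k) := Win_sub hWq (by omega)
    rw [hwin, hc'q]
    have e1 : q + M = q + k + (M - k) := by omega
    have h5 : Win U (q + k) (M - k + 1) = Win U (q + k) (M - k) ++ [U (q + M)] := by
      rw [Win_succ, e1]
    rw [← h5]
    exact isFactor_Win U (q + k) (M - k + 1)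
  exact ⟨isFactor_Win U (i + k) (M - k), c, d, hcd, key c hc, key d hd⟩

end RSdrop

end StP

namespace StP

variable {A : Type*}

section NoThree

variable {U : ℕ → A} {w : List A}

/-- Two distinct return words give a position where the suffix-sequences differ. -/
lemma dist_of_ret_ne {ip jp iq jq : ℕ}
    (hpo : OccursAt U w ip) (hpj : OccursAt U w jp) (hpij : ip < jp)
    (hpb : ∀ t, ip < t → t < jp → ¬ OccursAt U w t)
    (hqo : OccursAt U w iq) (hqj : OccursAt U w jq) (hqij : iq < jq)
    (hqb : ∀ t, iq < t → t < jq → ¬ OccursAt U w t)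
    (hne : Win U ip (jp - ip) ≠ Win U iq (jq - iq)) :
    ∃ t, U (ip + t) ≠ U (iq + t) := by
  by_contra hcon
  push_neg at hcon
  have hwin : ∀ L, Win U ip L = Win U iq L := fun L => Win_eq_Win (fun t _ => hcon t)
  have htrans : ∀ t, OccursAt U w (ip + t) ↔ OccursAt U w (iq + t) := by
    intro t
    rw [occursAt_iff, occursAt_iff]
    have : Win U (ip + t) w.length = Win U (iq + t) w.length := by
      apply Win_eq_Win
      intro s _
      have := hcon (t + s)
      rwa [← Nat.add_assoc, ← Nat.add_assoc] at this
    rw [this]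
  set dp := jp - ip with hdp
  set dq := jq - iq with hdq
  have h1 : OccursAt U w (iq + dp) := by
    rw [← htrans]
    have : ip + dp = jp := by omega
    rwa [this]
  have h2 : OccursAt U w (ip + dq) := by
    rw [htrans]
    have : iq + dq = jq := by omega
    rwa [this]
  have hqle : dq ≤ dp := by
    by_contra h
    exact hqb (iq + dp) (by omega) (by omega) h1
  have hple : dp ≤ dq := by
    by_contra h
    exact hpb (ip + dq) (by omega) (by omega) h2
  have : dp = dq := le_antisymm hple hqle
  rw [← this] at hne
  exact hne (hwin dp)

variable [Finite A] (hcompl : ∀ n : ℕ, Complexity U n = n + 1)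
include hcompl

/-- The key contradiction for a pair of return words that agree to depth `M` past
a common right-special prefix of depth `m`. -/
lemma pair_contra {i2 j2 i3 j3 m M : ℕ}
    (h2o : OccursAt U w i2) (h2j : OccursAt U w j2) (h2ij : i2 < j2)
    (h2b : ∀ t, i2 < t → t < j2 → ¬ OccursAt U w t)
    (h3o : OccursAt U w i3) (h3j : OccursAt U w j3) (h3ij : i3 < j3)
    (h3b : ∀ t, i3 < t → t < j3 → ¬ OccursAt U w t)
    (hrne : Win U i2 (j2 - i2) ≠ Win U i3 (j3 - i3))
    (hagree : Win U i2 M = Win U i3 M)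
    (hdiv : U (i2 + M) ≠ U (i3 + M))
    (hmM : m < M) (hnm : w.length ≤ m)
    (hzRS : RS U (Win U i2 m)) : False := by
  set n := w.length with hn
  set d2 := j2 - i2 with hd2
  set d3 := j3 - i3 with hd3
  have hz'RS : RS U (Win U i2 M) := by
    refine ⟨isFactor_Win U i2 M, U (i2 + M), U (i3 + M), hdiv, ?_, ?_⟩
    · rw [← Win_succ]; exact isFactor_Win U i2 (M + 1)
    · rw [hagree, ← Win_succ]; exact isFactor_Win U i3 (M + 1)
  have hdropRS : RS U (Win U (i2 + (M - m)) m) := by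
    have := RS_win_drop (k := M - m) (by omega) hz'RS
    have e : M - (M - m) = m := by omega
    rwa [e] at this
  have hzeq : Win U (i2 + (M - m)) m = Win U i2 m :=
    RS_unique hcompl hdropRS hzRS (length_Win U _ m) (length_Win U i2 m)
  have hw2occ : OccursAt U w (i2 + (M - m)) := by
    rw [occursAt_iff]
    have h1 : Win U (i2 + (M - m)) n = Win U i2 n := by
      have := Win_sub (M := m) hzeq (k := 0) (m := n) (by omega)
      simpa using this
    rw [← hn, h1]
    exact occursAt_iff.mp h2o
  have hw3occ : OccursAt U w (i3 + (M - m)) := by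
    rw [occursAt_iff]
    have h1 : Win U (i3 + (M - m)) n = Win U (i2 + (M - m)) n :=
      Win_sub hagree.symm (by omega)
    rw [← hn, h1]
    exact occursAt_iff.mp hw2occ
  have hd2le : d2 ≤ M - m := by
    by_contra h
    exact h2b (i2 + (M - m)) (by omega) (by omega) hw2occ
  have hd3le : d3 ≤ M - m := by
    by_contra h
    exact h3b (i3 + (M - m)) (by omega) (by omega) hw3occ
  have hdne : d2 ≠ d3 := by
    intro h
    apply hrne
    have h9 := Win_sub (M := M) hagree (k := 0) (m := d2) (by omega)
    simp only [Nat.add_zero] at h9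
    rw [← h]
    exact h9
  rcases Nat.lt_or_ge d2 d3 with hlt | hge
  · -- w occurs at i3 + d2, strictly inside the return at i3
    have hocc : OccursAt U w (i3 + d2) := by
      rw [occursAt_iff]
      have h1 : Win U (i3 + d2) n = Win U (i2 + d2) n :=
        Win_sub hagree.symm (by omega)
      rw [← hn, h1]
      have : i2 + d2 = j2 := by omega
      rw [this]
      exact occursAt_iff.mp h2j
    exact h3b (i3 + d2) (by omega) (by omega) hocc
  · have hgt : d3 < d2 := by omega
    have hocc : OccursAt U w (i2 + d3) := by
      rw [occursAt_iff]
      have h1 : Win U (i2 + d3) n = Win U (i3 + d3) n :=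
        Win_sub hagree (by omega)
      rw [← hn, h1]
      have : i3 + d3 = j3 := by omega
      rw [this]
      exact occursAt_iff.mp h3j
    exact h2b (i2 + d3) (by omega) (by omega) hocc

end NoThree

end StP

namespace StP

variable {A : Type*}

section NoThree2

variable {U : ℕ → A} {w : List A} [Finite A]

lemma occ_agree {a b : ℕ} (ha : OccursAt U w a) (hb : OccursAt U w b) :
    ∀ t, t < w.length → U (a + t) = U (b + t) := by
  intro t ht
  have h1 := occursAt_iff.mp ha
  have h2 := occursAt_iff.mp hb
  exact eq_of_Win_eq (h1 ▸ h2 : Win U a w.length = Win U b w.length) ht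

lemma no_three_returns (hcompl : ∀ n : ℕ, Complexity U n = n + 1)
    {r1 r2 r3 : List A} (h1 : r1 ∈ ReturnWords U w) (h2 : r2 ∈ ReturnWords U w)
    (h3 : r3 ∈ ReturnWords U w) (h12 : r1 ≠ r2) (h13 : r1 ≠ r3)
    (h23 : r2 ≠ r3) : False := by
  classical
  obtain ⟨i1, j1, h1o, h1j, h1ij, h1b, e1⟩ := h1
  obtain ⟨i2, j2, h2o, h2j, h2ij, h2b, e2⟩ := h2
  obtain ⟨i3, j3, h3o, h3j, h3ij, h3b, e3⟩ := h3
  have e1' : r1 = Win U i1 (j1 - i1) := e1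
  have e2' : r2 = Win U i2 (j2 - i2) := e2
  have e3' : r3 = Win U i3 (j3 - i3) := e3
  rw [e1', e2'] at h12
  rw [e1', e3'] at h13
  rw [e2', e3'] at h23
  set n := w.length with hn
  -- divergence depths
  have hx12 := dist_of_ret_ne h1o h1j h1ij h1b h2o h2j h2ij h2b h12
  have hx13 := dist_of_ret_ne h1o h1j h1ij h1b h3o h3j h3ij h3b h13
  have hx23 := dist_of_ret_ne h2o h2j h2ij h2b h3o h3j h3ij h3b h23
  set D12 := Nat.find hx12 with hD12
  set D13 := Nat.find hx13 with hD13
  set D23 := Nat.find hx23 with hD23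
  have hne12 : U (i1 + D12) ≠ U (i2 + D12) := Nat.find_spec hx12
  have hne13 : U (i1 + D13) ≠ U (i3 + D13) := Nat.find_spec hx13
  have hne23 : U (i2 + D23) ≠ U (i3 + D23) := Nat.find_spec hx23
  have hag12 : ∀ t, t < D12 → U (i1 + t) = U (i2 + t) := fun t ht =>
    not_ne_iff.mp (Nat.find_min hx12 ht)
  have hag13 : ∀ t, t < D13 → U (i1 + t) = U (i3 + t) := fun t ht =>
    not_ne_iff.mp (Nat.find_min hx13 ht)
  have hag23 : ∀ t, t < D23 → U (i2 + t) = U (i3 + t) := fun t ht =>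
    not_ne_iff.mp (Nat.find_min hx23 ht)
  have hn12 : n ≤ D12 := by
    by_contra hcon
    exact hne12 (occ_agree h1o h2o D12 (by omega))
  have hn13 : n ≤ D13 := by
    by_contra hcon
    exact hne13 (occ_agree h1o h3o D13 (by omega))
  have hn23 : n ≤ D23 := by
    by_contra hcon
    exact hne23 (occ_agree h2o h3o D23 (by omega))
  -- window agreements
  have hw12 : ∀ L, L ≤ D12 → Win U i1 L = Win U i2 L := fun L hL =>
    Win_eq_Win (fun t ht => hag12 t (by omega))
  have hw13 : ∀ L, L ≤ D13 → Win U i1 L = Win U i3 L := fun L hL =>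
    Win_eq_Win (fun t ht => hag13 t (by omega))
  have hw23 : ∀ L, L ≤ D23 → Win U i2 L = Win U i3 L := fun L hL =>
    Win_eq_Win (fun t ht => hag23 t (by omega))
  rcases lt_trichotomy D12 D23 with h | h | h
  · rcases lt_trichotomy D13 D12 with hh | hh | hh
    · -- D13 strictly smallest
      exact hne13 ((hag12 D13 hh).trans (hag23 D13 (by omega)))
    · -- D13 = D12 < D23 : pair (2,3), m = D12, M = D23
      refine pair_contra hcompl h2o h2j h2ij h2b h3o h3j h3ij h3b h23
        (hw23 D23 le_rfl) hne23 h hn12 ?_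
      refine ⟨isFactor_Win U i2 D12, U (i2 + D12), U (i1 + D12), hne12.symm, ?_, ?_⟩
      · rw [← Win_succ]; exact isFactor_Win U i2 (D12 + 1)
      · rw [← hw12 D12 le_rfl, ← Win_succ]
        exact isFactor_Win U i1 (D12 + 1)
    · -- D12 strictly smallest
      exact hne12 ((hag13 D12 hh).trans (hag23 D12 (by omega)).symm)
  · rcases lt_trichotomy D13 D12 with hh | hh | hh
    · -- D13 strictly smallest
      exact hne13 ((hag12 D13 hh).trans (hag23 D13 (by omega)))
    · -- all equal : triple extension
      apply no_3ext hcompl (isFactor_Win U i1 D12) (length_Win U i1 D12)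
        (c := U (i1 + D12)) (d := U (i2 + D12)) (e := U (i3 + D12))
        hne12 (hh ▸ hne13) (h ▸ hne23)
      · rw [← Win_succ]; exact isFactor_Win U i1 (D12 + 1)
      · rw [hw12 D12 le_rfl, ← Win_succ]; exact isFactor_Win U i2 (D12 + 1)
      · rw [hw13 D12 (le_of_eq hh.symm), ← Win_succ]
        exact isFactor_Win U i3 (D12 + 1)
    · -- D12 = D23 < D13 : pair (1,3), m = D12, M = D13
      refine pair_contra hcompl h1o h1j h1ij h1b h3o h3j h3ij h3b h13
        (hw13 D13 le_rfl) hne13 hh hn12 ?_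
      refine ⟨isFactor_Win U i1 D12, U (i1 + D12), U (i2 + D12), hne12, ?_, ?_⟩
      · rw [← Win_succ]; exact isFactor_Win U i1 (D12 + 1)
      · rw [hw12 D12 le_rfl, ← Win_succ]
        exact isFactor_Win U i2 (D12 + 1)
  · rcases lt_trichotomy D13 D23 with hh | hh | hh
    · -- D13 strictly smallest
      exact hne13 ((hag12 D13 (by omega)).trans (hag23 D13 (by omega)))
    · -- D13 = D23 < D12 : pair (1,2), m = D13, M = D12
      refine pair_contra hcompl h1o h1j h1ij h1b h2o h2j h2ij h2b h12
        (hw12 D12 le_rfl) hne12 (by omega) hn13 ?_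
      refine ⟨isFactor_Win U i1 D13, U (i1 + D13), U (i3 + D13), hne13, ?_, ?_⟩
      · rw [← Win_succ]; exact isFactor_Win U i1 (D13 + 1)
      · rw [hw13 D13 le_rfl, ← Win_succ]
        exact isFactor_Win U i3 (D13 + 1)
    · -- D23 strictly smallest
      exact hne23 (((hag12 D23 h).symm).trans (hag13 D23 hh))

end NoThree2

end StP

namespace StP

variable {A : Type*}

section MainForward

variable {U : ℕ → A} [Finite A]

theorem forward_dir (hrec : Recurrent U)
    (haper : ¬ ∃ p : ℕ, 0 < p ∧ ∃ N : ℕ, ∀ n ≥ N, U (n + p) = U n)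
    (hcompl : ∀ n : ℕ, Complexity U n = n + 1) :
    ∀ w : List A, IsFactor U w →
      (ReturnWords U w).Finite ∧ (ReturnWords U w).ncard = 2 := by
  intro w hw
  have hex : ∃ r ∈ ReturnWords U w, r ≠ ret U w 0 := by
    by_contra hcon
    push_neg at hcon
    exact haper (periodic_of_unique_return hrec hw hcon)
  obtain ⟨r2, hr2, hr2ne⟩ := hex
  have hset : ReturnWords U w = {ret U w 0, r2} := by
    ext r
    constructor
    · intro hr
      by_cases ha : r = ret U w 0
      · exact Or.inl ha
      · by_cases hb : r = r2
        · exact Or.inr hb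
        · exact absurd (no_three_returns hcompl hr (ret_mem hrec hw 0) hr2
            ha hb hr2ne.symm) not_false
    · rintro (rfl | rfl)
      · exact ret_mem hrec hw 0
      · exact hr2
  rw [hset]
  exact ⟨(Set.finite_singleton _).insert _, Set.ncard_pair hr2ne.symm⟩

end MainForward

section BackAperiodic

variable {U : ℕ → A}

theorem backward_aperiodic (hrec : Recurrent U)
    (hRW : ∀ w : List A, IsFactor U w →
      (ReturnWords U w).Finite ∧ (ReturnWords U w).ncard = 2) :
    ¬ ∃ p : ℕ, 0 < p ∧ ∃ N : ℕ, ∀ n ≥ N, U (n + p) = U n := by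
  classical
  rintro ⟨p, hp, N, hper⟩
  -- purely periodic
  have hpure : ∀ t, U (t + p) = U t := by
    intro t
    obtain ⟨i, hiN, hio⟩ := hrec (Win U 0 (t + p + 1)) (isFactor_Win _ _ _) N
    rw [occursAt_iff] at hio
    rw [length_Win] at hio
    have heq : ∀ s, s < t + p + 1 → U s = U (i + s) := by
      intro s hs
      have := eq_of_Win_eq hio hs
      simpa using this
    have h1 : U (t + p) = U (i + (t + p)) := heq (t + p) (by omega)
    have h2 : U (i + t + p) = U (i + t) := hper (i + t) (by omega)
    have h3 : U t = U (i + t) := heq t (by omega)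
    rw [h1, ← Nat.add_assoc, h2, h3]
  have hexq : ∃ q, 0 < q ∧ ∀ t, U (t + q) = U t := ⟨p, hp, hpure⟩
  set q := Nat.find hexq with hq
  obtain ⟨hqpos, hqper⟩ : 0 < q ∧ ∀ t, U (t + q) = U t := Nat.find_spec hexq
  have hmult : ∀ a t, U (t + a * q) = U t := by
    intro a
    induction a with
    | zero => simp
    | succ a ih =>
      intro t
      have : t + (a + 1) * q = (t + q) + a * q := by ring
      rw [this, ih, hqper]
  set w := Win U 0 (2 * q) with hwdef
  have hOcc : ∀ i, OccursAt U w i ↔ q ∣ i := by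
    intro i
    constructor
    · intro hio
      rw [occursAt_iff] at hio
      rw [hwdef, length_Win] at hio
      have hocc : ∀ s, s < 2 * q → U s = U (i + s) := by
        intro s hs
        have := eq_of_Win_eq hio hs
        simpa using this
      set d := i % q with hd
      have hdlt : d < q := Nat.mod_lt _ hqpos
      have hall : ∀ t, U (t + d) = U t := by
        intro t
        have hdm : i % q + i / q * q = i := Nat.mod_add_div' i q
        have hdm2 : t % q + t / q * q = t := Nat.mod_add_div' t q
        have h1 : U (i + (t % q)) = U (d + (t % q)) := by
          have : i + (t % q) = (d + (t % q)) + (i / q) * q := by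
            rw [hd]
            omega
          rw [this, hmult]
        have h2 : U (t % q) = U (i + (t % q)) := hocc (t % q) (by
          have := Nat.mod_lt t hqpos
          omega)
        have h3 : U (t + d) = U ((t % q) + d) := by
          have : t + d = ((t % q) + d) + (t / q) * q := by omega
          rw [this, hmult]
        have h4 : U t = U (t % q) := by
          have : t = (t % q) + (t / q) * q := by omega
          conv_lhs => rw [this]
          rw [hmult]
        rw [h3, Nat.add_comm (t % q) d, ← h1, ← h2, ← h4]
      rcases Nat.eq_zero_or_pos d with h0 | h0
      · exact Nat.dvd_of_mod_eq_zero h0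
      · exfalso
        exact Nat.find_min hexq hdlt ⟨h0, hall⟩
    · rintro ⟨a, rfl⟩
      rw [occursAt_iff, hwdef, length_Win]
      apply Win_eq_Win
      intro t ht
      have : q * a + t = t + a * q := by ring
      rw [this, hmult]
      simp
  have hwfact : IsFactor U w := isFactor_Win U 0 (2 * q)
  have huniq : ∀ r ∈ ReturnWords U w, r = Win U 0 q := by
    rintro r ⟨i, j, hi, hj, hij, hbet, hr⟩
    obtain ⟨a, rfl⟩ := (hOcc i).mp hi
    obtain ⟨b, hb⟩ := (hOcc j).mp hj
    have hjqi : j = q * a + q := by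
      have hablt : a < b := by
        have h0 : q * a < q * b := by rw [← hb]; exact hij
        exact Nat.lt_of_mul_lt_mul_left h0
      have h1 : q * a + q ≤ j := by
        rw [hb]
        calc q * a + q = q * (a + 1) := by ring
          _ ≤ q * b := Nat.mul_le_mul_left q hablt
      rcases Nat.lt_or_ge (q * a + q) j with hlt | hge
      · exfalso
        apply hbet (q * a + q) (by omega) hlt
        rw [hOcc]
        exact ⟨a + 1, by ring⟩
      · omega
    have hr' : r = Win U (q * a) (j - q * a) := hr
    rw [hr', hjqi]
    have : q * a + q - q * a = q := by omega
    rw [this]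
    apply Win_eq_Win
    intro t ht
    have : q * a + t = t + a * q := by ring
    rw [this, hmult]
    simp
  have h2 := (hRW w hwfact).2
  have hsub : ReturnWords U w ⊆ {Win U 0 q} := by
    intro r hr
    exact huniq r hr
  have : (ReturnWords U w).ncard ≤ 1 := by
    calc (ReturnWords U w).ncard ≤ ({Win U 0 q} : Set (List A)).ncard :=
        Set.ncard_le_ncard hsub (Set.finite_singleton _)
      _ = 1 := Set.ncard_singleton _
  omega

end BackAperiodic

end StP

namespace StP

variable {A : Type*}

section BackHelpers

variable {U : ℕ → A}

lemma occ_append_iff {s : List A} {c : A} {q : ℕ} :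
    OccursAt U (s ++ [c]) q ↔ OccursAt U s q ∧ U (q + s.length) = c := by
  constructor
  · intro h
    refine ⟨occursAt_prefix (List.prefix_append s [c]) h, ?_⟩
    have h1 := h ⟨s.length, by simp⟩
    simpa using h1
  · rintro ⟨h1, h2⟩
    exact occursAt_append_elem h1 h2

lemma isFactor_cons_tail {x : A} {z : List A} (h : IsFactor U (x :: z)) :
    IsFactor U z := by
  obtain ⟨p, hp⟩ := h
  exact ⟨p + 1, (occursAt_cons hp).1⟩

lemma RS_tail {x : A} {z : List A} (h : RS U (x :: z)) : RS U z := by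
  obtain ⟨hf, c, d, hcd, hc, hd⟩ := h
  refine ⟨isFactor_cons_tail hf, c, d, hcd, ?_, ?_⟩
  · exact isFactor_cons_tail (by simpa using hc)
  · exact isFactor_cons_tail (by simpa using hd)

lemma eq_pair_of_mem {S : Set (List A)} {r r' x y : List A}
    (h : S = {r, r'}) (hx : x ∈ S) (hy : y ∈ S) (hxy : x ≠ y) : S = {x, y} := by
  subst h
  rcases hx with rfl | hx
  · rcases hy with rfl | hy
    · exact absurd rfl hxy
    · rw [Set.mem_singleton_iff] at hy
      rw [hy]
  · rw [Set.mem_singleton_iff] at hx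
    subst hx
    rcases hy with rfl | hy
    · rw [Set.pair_comm]
    · rw [Set.mem_singleton_iff] at hy
      exact absurd (by rw [hy] : x = y) hxy

lemma no_three_of_pair {S : Set (List A)} {r r' : List A}
    (h : S = {r, r'}) {x y z : List A} (hx : x ∈ S) (hy : y ∈ S) (hz : z ∈ S)
    (hxy : x ≠ y) (hxz : x ≠ z) (hyz : y ≠ z) : False := by
  subst h
  rcases hx with rfl | hx
  · rcases hy with rfl | hy
    · exact hxy rfl
    · rw [Set.mem_singleton_iff] at hy
      subst hy
      rcases hz with rfl | hz
      · exact hxz rfl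
      · rw [Set.mem_singleton_iff] at hz
        exact hyz (by rw [hz])
  · rw [Set.mem_singleton_iff] at hx
    subst hx
    rcases hy with rfl | hy
    · rcases hz with rfl | hz
      · exact hyz rfl
      · rw [Set.mem_singleton_iff] at hz
        exact hxz (by rw [hz])
    · rw [Set.mem_singleton_iff] at hy
      exact hxy (by rw [hy])

end BackHelpers

end StP

namespace StP

variable {A : Type*}

section GapDich

variable {U : ℕ → A}

lemma gap_dich (hrec : Recurrent U)
    (hRW : ∀ w : List A, IsFactor U w →
      (ReturnWords U w).Finite ∧ (ReturnWords U w).ncard = 2)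
    {s ra rb : List A} {c1 c2 : A}
    (hsf : IsFactor U s) (hc12 : c1 ≠ c2) (hrab : ra ≠ rb)
    (hw1f : IsFactor U (s ++ [c1]))
    (hiffa : ∀ k, ret U s k = ra ↔ U (en U s k + s.length) = c1)
    (hiffb : ∀ k, ret U s k = rb ↔ U (en U s k + s.length) = c2)
    (hpairk : ∀ k, ret U s k = ra ∨ ret U s k = rb)
    (hrbpos : 0 < rb.length)
    (hnext : ∀ k, ∃ j, k < j ∧ ret U s j = ra)
    {kaa : ℕ} (hkaa1 : ret U s kaa = ra) (hkaa2 : ret U s (kaa + 1) = ra)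
    {kab : ℕ} (hkab1 : ret U s kab = ra) (hkab2 : ret U s (kab + 1) = rb) :
    ∃ g1, 2 ≤ g1 ∧ ∀ k, ret U s k = ra → ret U s (k + 1) = rb →
      (∀ j, 1 ≤ j → j < g1 → ret U s (k + j) = rb) ∧ ret U s (k + g1) = ra := by
  classical
  set L := s.length with hL
  -- length formula for candidate return words of s ++ [c1]
  have hlenf : ∀ k g, 1 ≤ g → ret U s k = ra →
      (∀ j, 0 < j → j < g → ret U s (k + j) = rb) →
      en U s (k + g) = en U s k + (ra.length + (g - 1) * rb.length) := by
    intro k g hg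
    induction g, hg using Nat.le_induction with
    | base =>
      intro h1 _
      have := ret_length hrec hsf (w := s) k
      rw [h1] at this
      simpa using this
    | succ g hg ih =>
      intro h1 hmid
      have ihv := ih h1 (fun j hj1 hj2 => hmid j hj1 (by omega))
      have hgb : ret U s (k + g) = rb := hmid g (by omega) (by omega)
      have hstep := ret_length hrec hsf (w := s) (k + g)
      rw [hgb] at hstep
      have e1 : k + (g + 1) = k + g + 1 := by omega
      rw [e1, hstep, ihv]
      have e2 : (g + 1 - 1) * rb.length = (g - 1) * rb.length + rb.length := by
        have e3 : g + 1 - 1 = (g - 1) + 1 := by omega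
        rw [e3, Nat.succ_mul]
      omega
  have hmemf : ∀ k g, 1 ≤ g → ret U s k = ra → ret U s (k + g) = ra →
      (∀ j, 0 < j → j < g → ret U s (k + j) = rb) →
      Win U (en U s k) (en U s (k + g) - en U s k) ∈ ReturnWords U (s ++ [c1]) := by
    intro k g hg h1 h2 hmid
    refine ⟨en U s k, en U s (k + g), ?_, ?_, ?_, ?_, rfl⟩
    · exact occ_append_iff.mpr ⟨en_occ hrec hsf k, (hiffa k).mp h1⟩
    · exact occ_append_iff.mpr ⟨en_occ hrec hsf (k + g), (hiffa (k + g)).mp h2⟩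
    · exact (en_strictMono hrec hsf).lt_iff_lt.mpr (by omega)
    · intro t ht1 ht2 hocc
      have hos : OccursAt U s t := (occ_append_iff.mp hocc).1
      have hcv : U (t + L) = c1 := (occ_append_iff.mp hocc).2
      obtain ⟨j, hj⟩ := en_surj hrec hsf hos
      have hj1 : k < j := by
        have := (en_strictMono hrec hsf (w := s)).lt_iff_lt (a := k) (b := j)
        rw [hj] at this
        exact this.mp ht1
      have hj2 : j < k + g := by
        have := (en_strictMono hrec hsf (w := s)).lt_iff_lt (a := j) (b := k + g)
        rw [hj] at this
        exact this.mp ht2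
      have hrbj : ret U s j = rb := by
        have e : k + (j - k) = j := by omega
        rw [← e]
        exact hmid (j - k) (by omega) (by omega)
      have := (hiffb j).mp hrbj
      rw [hj, hcv] at this
      exact hc12 this
  -- the canonical big gap
  have hfind := hnext kab
  set j0 := Nat.find hfind with hj0def
  obtain ⟨hj0gt, hj0ra⟩ : kab < j0 ∧ ret U s j0 = ra := Nat.find_spec hfind
  have hj0min : ∀ j, j < j0 → ¬(kab < j ∧ ret U s j = ra) := fun j hj =>
    Nat.find_min hfind hj
  set g1 := j0 - kab with hg1def
  have hg1 : 2 ≤ g1 := by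
    rcases Nat.lt_or_ge j0 (kab + 2) with h | h
    · exfalso
      have : j0 = kab + 1 := by omega
      rw [this] at hj0ra
      rw [hkab2] at hj0ra
      exact hrab hj0ra.symm
    · omega
  have hkabmid : ∀ j, 0 < j → j < g1 → ret U s (kab + j) = rb := by
    intro j h1 h2
    rcases hpairk (kab + j) with h | h
    · exact absurd ⟨by omega, h⟩ (hj0min (kab + j) (by omega))
    · exact h
  have hkabend : ret U s (kab + g1) = ra := by
    have e : kab + g1 = j0 := by omega
    rw [e]
    exact hj0ra
  -- dichotomy of gaps
  have hdich : ∀ k g, 1 ≤ g → ret U s k = ra → ret U s (k + g) = ra →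
      (∀ j, 0 < j → j < g → ret U s (k + j) = rb) → g = 1 ∨ g = g1 := by
    intro k g hg h1 h2 hmid
    by_contra hcon
    push_neg at hcon
    obtain ⟨hne1, hneg1⟩ := hcon
    have m1 := hmemf kaa 1 le_rfl hkaa1 (by simpa using hkaa2) (by omega)
    have m2 := hmemf kab g1 (by omega) hkab1 hkabend hkabmid
    have m3 := hmemf k g hg h1 h2 hmid
    have hL1 : en U s (kaa + 1) - en U s kaa = ra.length + 0 * rb.length := by
      have := hlenf kaa 1 le_rfl hkaa1 (by omega)
      have hle := (en_strictMono hrec hsf (w := s)).le_iff_le (a := kaa) (b := kaa + 1)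
      omega
    have hL2 : en U s (kab + g1) - en U s kab = ra.length + (g1 - 1) * rb.length := by
      have := hlenf kab g1 (by omega) hkab1 hkabmid
      omega
    have hL3 : en U s (k + g) - en U s k = ra.length + (g - 1) * rb.length := by
      have := hlenf k g hg h1 hmid
      omega
    have hmulne : ∀ g g' : ℕ, 1 ≤ g → 1 ≤ g' → g ≠ g' →
        ra.length + (g - 1) * rb.length ≠ ra.length + (g' - 1) * rb.length := by
      intro g g' hgp hgp' hne heq
      have h5 : (g - 1) * rb.length = (g' - 1) * rb.length := by omega
      have := Nat.eq_of_mul_eq_mul_right hrbpos h5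
      omega
    obtain ⟨p, q, hpq, hpair1⟩ := Set.ncard_eq_two.mp (hRW _ hw1f).2
    refine no_three_of_pair hpair1 m1 m2 m3 ?_ ?_ ?_
    · intro h
      have := congrArg List.length h
      simp only [length_Win] at this
      rw [hL1, hL2] at this
      exact hmulne 1 g1 le_rfl (by omega) (by omega) this
    · intro h
      have := congrArg List.length h
      simp only [length_Win] at this
      rw [hL1, hL3] at this
      exact hmulne 1 g le_rfl hg (by omega) this
    · intro h
      have := congrArg List.length h
      simp only [length_Win] at this
      rw [hL2, hL3] at this
      exact hmulne g1 g (by omega) hg (by omega) this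
  -- conclusion
  refine ⟨g1, hg1, fun k hk1 hk2 => ?_⟩
  have hfk := hnext k
  set jk := Nat.find hfk with hjkdef
  obtain ⟨hjkgt, hjkra⟩ : k < jk ∧ ret U s jk = ra := Nat.find_spec hfk
  have hjkmin : ∀ j, j < jk → ¬(k < j ∧ ret U s j = ra) := fun j hj =>
    Nat.find_min hfk hj
  set g := jk - k with hgdef
  have hgmid : ∀ j, 0 < j → j < g → ret U s (k + j) = rb := by
    intro j h1 h2
    rcases hpairk (k + j) with h | h
    · exact absurd ⟨by omega, h⟩ (hjkmin (k + j) (by omega))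
    · exact h
  have hgend : ret U s (k + g) = ra := by
    have e : k + g = jk := by omega
    rw [e]
    exact hjkra
  have hgne1 : g ≠ 1 := by
    intro h
    rw [h] at hgend
    rw [hk2] at hgend
    exact hrab hgend.symm
  have hgg1 : g = g1 := by
    rcases hdich k g (by omega) hk1 hgend hgmid with h | h
    · exact absurd h hgne1
    · exact h
  constructor
  · intro j h1 h2
    exact hgmid j (by omega) (by omega)
  · rw [← hgg1]
    exact hgend

end GapDich

end StP

namespace StP

variable {A : Type*}

section TwoRS

variable {U : ℕ → A}

theorem two_RS_contra (hrec : Recurrent U)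
    (hRW : ∀ w : List A, IsFactor U w →
      (ReturnWords U w).Finite ∧ (ReturnWords U w).ncard = 2)
    {a b : A} {s : List A} (hab : a ≠ b)
    (hu : RS U (a :: s)) (hv : RS U (b :: s)) :
    ∃ p : ℕ, 0 < p ∧ ∃ N : ℕ, ∀ n ≥ N, U (n + p) = U n := by
  classical
  have hs : RS U s := RS_tail hu
  have hsf : IsFactor U s := hs.1
  set L := s.length with hLdef
  obtain ⟨c1, c2, hc12, hc1, hc2⟩ := hs.2
  obtain ⟨rr, rr', hrne, hpair0⟩ := Set.ncard_eq_two.mp (hRW s hsf).2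
  obtain ⟨ra, hra_mem, hra⟩ := fol_surj hrec hsf hc1
  obtain ⟨rb, hrb_mem, hrb⟩ := fol_surj hrec hsf hc2
  have hrab : ra ≠ rb := fun h => hc12 (by rw [← hra, h, hrb])
  have hpair : ReturnWords U s = {ra, rb} := eq_pair_of_mem hpair0 hra_mem hrb_mem hrab
  have hretpair : ∀ k, ret U s k = ra ∨ ret U s k = rb := by
    intro k
    have := ret_mem hrec hsf (w := s) k
    rw [hpair] at this
    simpa using this
  have hiffa : ∀ k, ret U s k = ra ↔ U (en U s k + L) = c1 := by
    intro k
    constructor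
    · intro h
      have := fol_ret hrec hsf (w := s) k
      rw [h, hra] at this
      exact this.symm
    · intro h
      rcases hretpair k with h' | h'
      · exact h'
      · exfalso
        have := fol_ret hrec hsf (w := s) k
        rw [h', hrb, h] at this
        exact hc12 this.symm
  have hiffb : ∀ k, ret U s k = rb ↔ U (en U s k + L) = c2 := by
    intro k
    constructor
    · intro h
      have := fol_ret hrec hsf (w := s) k
      rw [h, hrb] at this
      exact this.symm
    · intro h
      rcases hretpair k with h' | h'
      · exfalso
        have := fol_ret hrec hsf (w := s) k
        rw [h', hra, h] at this
        exact hc12 this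
      · exact h'
  -- any right extension of s is c1 or c2
  have hrext : ∀ c, IsFactor U (s ++ [c]) → c = c1 ∨ c = c2 := by
    intro c hc
    obtain ⟨ρ, hρ, hfolρ⟩ := fol_surj hrec hsf hc
    rw [hpair] at hρ
    rcases hρ with rfl | hρ
    · exact Or.inl (by rw [← hfolρ, hra])
    · rw [Set.mem_singleton_iff] at hρ
      subst hρ
      exact Or.inr (by rw [← hfolρ, hrb])
  -- last letters of the two return words are a and b in some order
  have hufact : IsFactor U (a :: s) := hu.1
  have hvfact : IsFactor U (b :: s) := hv.1
  obtain ⟨ρa, hρa_mem, hlsta⟩ := lst_surj hrec hsf hufact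
  obtain ⟨ρb, hρb_mem, hlstb⟩ := lst_surj hrec hsf hvfact
  have hlst_ne : lst U ra ≠ lst U rb := by
    have hρab : ρa ≠ ρb := fun h => hab (by rw [← hlsta, h, hlstb])
    have h4 := eq_pair_of_mem hpair hρa_mem hρb_mem hρab
    have hra2 : ra = ρa ∨ ra = ρb := by
      have : ra ∈ ReturnWords U s := hra_mem
      rw [h4] at this
      simpa using this
    have hrb2 : rb = ρa ∨ rb = ρb := by
      have : rb ∈ ReturnWords U s := hrb_mem
      rw [h4] at this
      simpa using this
    rcases hra2 with rfl | rfl <;> rcases hrb2 with h | h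
    · exact absurd h.symm hrab
    · rw [h, hlsta, hlstb]; exact hab
    · rw [h, hlstb, hlsta]; exact hab.symm
    · exact absurd h.symm hrab
  have hlst_mem : lst U ra = a ∨ lst U ra = b := by
    have hρab : ρa ≠ ρb := fun h => hab (by rw [← hlsta, h, hlstb])
    have h4 := eq_pair_of_mem hpair hρa_mem hρb_mem hρab
    have hra2 : ra = ρa ∨ ra = ρb := by
      have : ra ∈ ReturnWords U s := hra_mem
      rw [h4] at this
      simpa using this
    rcases hra2 with rfl | rfl
    · exact Or.inl hlsta
    · exact Or.inr hlstb
  have hlst_memb : lst U rb = a ∨ lst U rb = b := by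
    have hρab : ρa ≠ ρb := fun h => hab (by rw [← hlsta, h, hlstb])
    have h4 := eq_pair_of_mem hpair hρa_mem hρb_mem hρab
    have hrb2 : rb = ρa ∨ rb = ρb := by
      have : rb ∈ ReturnWords U s := hrb_mem
      rw [h4] at this
      simpa using this
    rcases hrb2 with rfl | rfl
    · exact Or.inl hlsta
    · exact Or.inr hlstb
  -- generator of two-blocks
  have hblockgen : ∀ x c, IsFactor U (x :: (s ++ [c])) →
      ∃ k, lst U (ret U s k) = x ∧ U (en U s (k + 1) + L) = c := by
    intro x c hf
    obtain ⟨p, hpge, hocc⟩ := hrec _ hf (en U s 0)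
    obtain ⟨h1, h2⟩ := occursAt_cons hocc
    have h3 : OccursAt U s (p + 1) := (occ_append_iff.mp h1).1
    have h4 : U (p + 1 + L) = c := (occ_append_iff.mp h1).2
    obtain ⟨k', hk'⟩ := en_surj hrec hsf h3
    have hk0 : k' ≠ 0 := by
      intro h
      rw [h] at hk'
      omega
    obtain ⟨k, rfl⟩ := Nat.exists_eq_succ_of_ne_zero hk0
    refine ⟨k, ?_, ?_⟩
    · rw [lst_ret hrec hsf k, hk']
      simpa using h2
    · rw [hk']
      exact h4
  -- all four two-sided extensions of s occur
  have hfour : ∀ x, (x = a ∨ x = b) → ∀ c, (c = c1 ∨ c = c2) →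
      IsFactor U (x :: (s ++ [c])) := by
    intro x hx c hc
    have hxs : RS U (x :: s) := by
      rcases hx with rfl | rfl
      · exact hu
      · exact hv
    obtain ⟨hxf, e, f, hef, he, hf⟩ := hxs
    have he2 : IsFactor U (x :: (s ++ [e])) := by simpa using he
    have hf2 : IsFactor U (x :: (s ++ [f])) := by simpa using hf
    have hee := hrext e (isFactor_cons_tail he2)
    have hff := hrext f (isFactor_cons_tail hf2)
    rcases hc with rfl | rfl
    · rcases hee with rfl | h
      · exact he2
      · rcases hff with rfl | h'
        · exact hf2
        · exact absurd (h.trans h'.symm) hef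
    · rcases hee with h | rfl
      · rcases hff with h' | rfl
        · exact absurd (h.trans h'.symm) hef
        · exact hf2
      · exact he2
  -- blocks of consecutive return words
  have hblock : ∀ ρ : List A, (ρ = ra ∨ ρ = rb) → ∀ σ : List A, (σ = ra ∨ σ = rb) →
      ∃ k, ret U s k = ρ ∧ ret U s (k + 1) = σ := by
    intro ρ hρ σ hσ
    have hx : lst U ρ = a ∨ lst U ρ = b := by
      rcases hρ with rfl | rfl
      · exact hlst_mem
      · exact hlst_memb
    have hcσ : (if σ = ra then c1 else c2) = c1 ∨ (if σ = ra then c1 else c2) = c2 := by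
      by_cases h : σ = ra
      · simp [h]
      · simp [h]
    obtain ⟨k, hk1, hk2⟩ := hblockgen (lst U ρ) (if σ = ra then c1 else c2)
      (hfour _ hx _ hcσ)
    refine ⟨k, ?_, ?_⟩
    · rcases hretpair k with h | h
      · rcases hρ with rfl | rfl
        · exact h
        · rw [h] at hk1
          exact absurd hk1 hlst_ne
      · rcases hρ with rfl | rfl
        · rw [h] at hk1
          exact absurd hk1.symm hlst_ne
        · exact h
    · rcases hσ with rfl | rfl
      · rw [if_pos rfl] at hk2
        exact (hiffa (k + 1)).mpr hk2
      · rw [if_neg (fun h => hrab h.symm)] at hk2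
        exact (hiffb (k + 1)).mpr hk2
  -- infinitude of each return word
  have hnexta : ∀ K, ∃ j, K < j ∧ ret U s j = ra := by
    intro K
    obtain ⟨p, hpge, hocc⟩ := hrec _ hc1 (en U s (K + 1))
    have h1 : OccursAt U s p := (occ_append_iff.mp hocc).1
    have h2 : U (p + L) = c1 := (occ_append_iff.mp hocc).2
    obtain ⟨j, hj⟩ := en_surj hrec hsf h1
    have hjK : K + 1 ≤ j := by
      have := (en_strictMono hrec hsf (w := s)).le_iff_le (a := K + 1) (b := j)
      rw [hj] at this
      exact this.mp hpge
    exact ⟨j, by omega, (hiffa j).mpr (by rw [hj]; exact h2)⟩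
  have hnextb : ∀ K, ∃ j, K < j ∧ ret U s j = rb := by
    intro K
    obtain ⟨p, hpge, hocc⟩ := hrec _ hc2 (en U s (K + 1))
    have h1 : OccursAt U s p := (occ_append_iff.mp hocc).1
    have h2 : U (p + L) = c2 := (occ_append_iff.mp hocc).2
    obtain ⟨j, hj⟩ := en_surj hrec hsf h1
    have hjK : K + 1 ≤ j := by
      have := (en_strictMono hrec hsf (w := s)).le_iff_le (a := K + 1) (b := j)
      rw [hj] at this
      exact this.mp hpge
    exact ⟨j, by omega, (hiffb j).mpr (by rw [hj]; exact h2)⟩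
  have hrapos : 0 < ra.length := return_pos hrec hsf hra_mem
  have hrbpos : 0 < rb.length := return_pos hrec hsf hrb_mem
  -- the four base blocks
  obtain ⟨kaa, hkaa1, hkaa2⟩ := hblock ra (Or.inl rfl) ra (Or.inl rfl)
  obtain ⟨kab, hkab1, hkab2⟩ := hblock ra (Or.inl rfl) rb (Or.inr rfl)
  obtain ⟨kba, hkba1, hkba2⟩ := hblock rb (Or.inr rfl) ra (Or.inl rfl)
  obtain ⟨kbb, hkbb1, hkbb2⟩ := hblock rb (Or.inr rfl) rb (Or.inr rfl)
  -- gap dichotomies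
  obtain ⟨g1, hg1, hA⟩ := gap_dich hrec hRW hsf hc12 hrab hc1 hiffa hiffb
    hretpair hrbpos hnexta hkaa1 hkaa2 hkab1 hkab2
  obtain ⟨f1, hf1, hB⟩ := gap_dich hrec hRW hsf hc12.symm hrab.symm hc2 hiffb hiffa
    (fun k => (hretpair k).symm) hrapos hnextb hkbb1 hkbb2 hkba1 hkba2
  -- the periodic pattern
  set P := (f1 - 1) + (g1 - 1) with hPdef
  have hPpos : 2 ≤ P := by omega
  have hstep : ∀ k, ret U s k = rb → ret U s (k + 1) = ra →
      (∀ t, 1 ≤ t → t ≤ P → ret U s (k + t) = (if t ≤ f1 - 1 then ra else rb)) ∧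
        (ret U s (k + P) = rb ∧ ret U s (k + P + 1) = ra) := by
    intro k h0 h1
    obtain ⟨hmidB, hendB⟩ := hB k h0 h1
    have ha1 : ret U s (k + (f1 - 1)) = ra := hmidB (f1 - 1) (by omega) (by omega)
    have ha2 : ret U s (k + (f1 - 1) + 1) = rb := by
      have e : k + (f1 - 1) + 1 = k + f1 := by omega
      rw [e]
      exact hendB
    obtain ⟨hmidA, hendA⟩ := hA (k + (f1 - 1)) ha1 ha2
    have hpat : ∀ t, 1 ≤ t → t ≤ P → ret U s (k + t) = (if t ≤ f1 - 1 then ra else rb) := by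
      intro t ht1 ht2
      by_cases h : t ≤ f1 - 1
      · rw [if_pos h]
        exact hmidB t ht1 (by omega)
      · rw [if_neg h]
        have e : k + t = k + (f1 - 1) + (t - (f1 - 1)) := by omega
        rw [e]
        exact hmidA (t - (f1 - 1)) (by omega) (by omega)
    refine ⟨hpat, ?_, ?_⟩
    · have := hpat P (by omega) le_rfl
      rw [if_neg (by omega)] at this
      exact this
    · have e : k + P + 1 = k + (f1 - 1) + g1 := by omega
      rw [e]
      exact hendA
  have hconf : ∀ q, ret U s (kba + q * P) = rb ∧ ret U s (kba + q * P + 1) = ra := by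
    intro q
    induction q with
    | zero => simpa using ⟨hkba1, hkba2⟩
    | succ q ih =>
      have := (hstep _ ih.1 ih.2).2
      have e : kba + (q + 1) * P = kba + q * P + P := by ring
      rw [e]
      exact this
  have hretper : ∀ j, kba ≤ j → ret U s (j + P) = ret U s j := by
    intro j hj
    rcases eq_or_lt_of_le hj with heq | hlt
    · rw [← heq]
      have h1 := (hconf 1).1
      have e : kba + 1 * P = kba + P := by ring
      rw [e] at h1
      rw [h1, hkba1]
    · set t := j - kba with htdef
      have ht1 : 1 ≤ t := by omega
      set q := (t - 1) / P with hqdef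
      set rem := (t - 1) % P with hremdef
      have hdm : rem + q * P = t - 1 := by
        rw [hremdef, hqdef]
        exact Nat.mod_add_div' (t - 1) P
      have hremlt : rem < P := by
        rw [hremdef]
        exact Nat.mod_lt _ (by omega)
      have hv1 := (hstep _ (hconf q).1 (hconf q).2).1 (rem + 1) (by omega) (by omega)
      have hv2 := (hstep _ (hconf (q + 1)).1 (hconf (q + 1)).2).1 (rem + 1)
        (by omega) (by omega)
      have e1 : kba + q * P + (rem + 1) = j := by omega
      have e2 : kba + (q + 1) * P + (rem + 1) = j + P := by
        have e3 : (q + 1) * P = q * P + P := by ring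
        omega
      rw [e1] at hv1
      rw [e2] at hv2
      rw [hv1, hv2]
  -- the shift constant
  set C := en U s (kba + P) - en U s kba with hCdef
  have hCpos : 0 < C := by
    have := (en_strictMono hrec hsf (w := s)).lt_iff_lt (a := kba) (b := kba + P)
    omega
  have hshift : ∀ j, kba ≤ j → en U s (j + P) = en U s j + C := by
    intro j hj
    induction j, hj using Nat.le_induction with
    | base =>
      have := (en_strictMono hrec hsf (w := s)).le_iff_le (a := kba) (b := kba + P)
      omega
    | succ j hj ih =>
      have h1 := ret_length hrec hsf (w := s) (j + P)
      have h2 := ret_length hrec hsf (w := s) j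
      have h3 := hretper j hj
      have e : j + 1 + P = j + P + 1 := by omega
      rw [e, h1, h3, ih, h2]
      omega
  refine ⟨C, hCpos, en U s kba, fun x hx => ?_⟩
  obtain ⟨k, hk0, hk1, hk2⟩ := en_loc hrec hsf hx
  have hlenk := ret_length hrec hsf (w := s) k
  have hlenkP := ret_length hrec hsf (w := s) (k + P)
  have hper := hretper k hk0
  set t := x - en U s k with htdef
  have ht : t < en U s (k + 1) - en U s k := by omega
  have hwin : Win U (en U s (k + P)) (en U s (k + 1) - en U s k) =
      Win U (en U s k) (en U s (k + 1) - en U s k) := by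
    have hll : en U s (k + P + 1) - en U s (k + P) = en U s (k + 1) - en U s k := by
      have := congrArg List.length hper
      simp only [ret, length_Win] at this
      exact this
    have h2 : ret U s (k + P) = Win U (en U s (k + P)) (en U s (k + P + 1) - en U s (k + P)) := rfl
    rw [hll] at h2
    rw [← h2, hper]
    rfl
  have hval := eq_of_Win_eq hwin ht
  have e1 : x + C = en U s (k + P) + t := by
    have := hshift k hk0
    omega
  have e2 : x = en U s k + t := by omega
  rw [e1, e2]
  exact hval

end TwoRS

end StP

namespace StP

variable {A : Type*}

section BackFinal

variable {U : ℕ → A} [Finite A]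

theorem backward_compl (hrec : Recurrent U)
    (hRW : ∀ w : List A, IsFactor U w →
      (ReturnWords U w).Finite ∧ (ReturnWords U w).ncard = 2) :
    ∀ n : ℕ, Complexity U n = n + 1 := by
  classical
  have haper := backward_aperiodic hrec hRW
  -- uniqueness of right special factors of each length
  have huniqRS : ∀ m : ℕ, ∀ u v : List A, RS U u → RS U v →
      u.length = m → v.length = m → u = v := by
    intro m
    induction m using Nat.strong_induction_on with
    | _ m ih =>
      intro u v hu hv hul hvl
      match m with
      | 0 =>
        rw [List.length_eq_zero_iff] at hul hvl
        rw [hul, hvl]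
      | m + 1 =>
        by_contra hne
        obtain ⟨a, su, rfl⟩ := List.exists_cons_of_ne_nil
          (show u ≠ [] by intro h; rw [h] at hul; simp at hul)
        obtain ⟨b, sv, rfl⟩ := List.exists_cons_of_ne_nil
          (show v ≠ [] by intro h; rw [h] at hvl; simp at hvl)
        have hsu : RS U su := RS_tail hu
        have hsv : RS U sv := RS_tail hv
        have hseq : su = sv := ih m (by omega) su sv hsu hsv
          (by simpa using hul) (by simpa using hvl)
        subst hseq
        have hab : a ≠ b := by
          intro h
          exact hne (by rw [h])
        exact haper (two_RS_contra hrec hRW hab hu hv)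
  -- each complexity increment is exactly one
  have hinc : ∀ m : ℕ, Complexity U (m + 1) = Complexity U m + 1 := by
    intro m
    by_cases hex : ∃ u : List A, u.length = m ∧ RS U u
    · obtain ⟨u, hulen, huRS⟩ := hex
      -- the two possible extensions of u
      obtain ⟨r, r', hrne, hpair⟩ := Set.ncard_eq_two.mp (hRW u huRS.1).2
      have hext : ∀ c, IsFactor U (u ++ [c]) → c = fol U u r ∨ c = fol U u r' := by
        intro c hc
        obtain ⟨ρ, hρ, hfolρ⟩ := fol_surj hrec huRS.1 hc
        rw [hpair] at hρ
        rcases hρ with rfl | hρ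
        · exact Or.inl hfolρ.symm
        · rw [Set.mem_singleton_iff] at hρ
          subst hρ
          exact Or.inr hfolρ.symm
      have hfne : fol U u r ≠ fol U u r' := by
        obtain ⟨c, d, hcd, hc, hd⟩ := huRS.2
        intro h
        rcases hext c hc with rfl | rfl <;> rcases hext d hd with rfl | rfl
        · exact hcd rfl
        · exact hcd h
        · exact hcd h.symm
        · exact hcd rfl
      have hle := compl_le_of_unique_RS hfne hext (fun z hzl hzf hzRS =>
        huniqRS m z u ⟨hzf, hzRS⟩ huRS hzl hulen)
      have hge := compl_ge_of_RS1 huRS.1 hulen huRS.2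
      omega
    · exfalso
      apply haper
      apply periodic_of_no_RS (m := m)
      intro z hzl hzf c d hc hd
      by_contra hcd
      exact hex ⟨z, hzl, hzf, c, d, hcd, hc, hd⟩
  -- base case
  have hbase : Complexity U 0 = 1 := by
    rw [complexity_eq]
    have : (Set.range fun i => Win U i 0) = {([] : List A)} := by
      ext w
      simp [Win]
    rw [this, Set.ncard_singleton]
  intro n
  induction n with
  | zero => exact hbase
  | succ n ihn => rw [hinc n, ihn]

end BackFinal

end StP


/-- a recurrent infinite word over a finite alphabet is aperiodic
Sturmian (complexity `p(n) = n + 1` for all `n`) iff every factor has exactly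
`2` return words. -/
theorem sturmian_iff_two_return_words
    {A : Type*} [Fintype A] (U : ℕ → A) (hrec : Recurrent U) :
    ((¬ ∃ p : ℕ, 0 < p ∧ ∃ N : ℕ, ∀ n ≥ N, U (n + p) = U n) ∧
        ∀ n : ℕ, Complexity U n = n + 1) ↔
      ∀ w : List A, IsFactor U w →
        (ReturnWords U w).Finite ∧ (ReturnWords U w).ncard = 2 := by
  constructor
  · rintro ⟨haper, hcompl⟩
    exact StP.forward_dir hrec haper hcompl
  · intro hRW
    exact ⟨StP.backward_aperiodic hrec hRW, StP.backward_compl hrec hRW⟩
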